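/- arXiv:0808.0275 — 8 statements merged into one kernel-verified Lean document; each statement's English description precedes it below -/
import Mathlib

section
/- Let A ⊆ B be an extension of integral domains and let R := A ⋉ B be the trivial ring extension of A by B. Then R is a Prüfer ring if and only if A is a Prüfer domain and every nonzero element of A maps to a unit of B (i.e., the quotient field K of A is contained in B). -/
/-- The content ideal `c(f)` of a polynomial: the ideal generated by its coefficients. -/
def contentIdeal {R : Type*} [CommRing R] (f : Polynomial R) : Ideal R :=
  Ideal.span (Set.range f.coeff)

/-- A polynomial `f` is Gaussian if `c(f*g) = c(f)*c(g)` for every polynomial `g`. -/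
def IsGaussianPoly {R : Type*} [CommRing R] (f : Polynomial R) : Prop :=
  ∀ g : Polynomial R, contentIdeal (f * g) = contentIdeal f * contentIdeal g

/-- A commutative ring is Gaussian if every polynomial over it is Gaussian. -/
def IsGaussianRing (R : Type*) [CommRing R] : Prop :=
  ∀ f : Polynomial R, IsGaussianPoly f

/-- A commutative ring is arithmetical if every finitely generated ideal is locally
principal: its extension to the localization at each maximal ideal is principal. -/
def IsArithmeticalRing (R : Type*) [CommRing R] : Prop :=
  ∀ I : Ideal R, I.FG → ∀ P : Ideal R, ∀ hP : P.IsMaximal,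
    haveI := hP.isPrime
    (I.map (algebraMap R (Localization P.primeCompl))).IsPrincipal

/-- A commutative ring is a Prüfer ring if every finitely generated ideal containing a
non-zero-divisor is invertible as a fractional ideal. -/
def IsPruferRing (R : Type*) [CommRing R] : Prop :=
  ∀ I : Ideal R, I.FG → (∃ r ∈ I, r ∈ nonZeroDivisors R) →
    IsUnit (I : FractionalIdeal (nonZeroDivisors R) (FractionRing R))

/-- An integral domain is a Prüfer domain if every nonzero finitely generated ideal is
invertible as a fractional ideal. -/
def IsPruferDomain (A : Type*) [CommRing A] [IsDomain A] : Prop :=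
  ∀ I : Ideal A, I.FG → I ≠ ⊥ →
    IsUnit (I : FractionalIdeal (nonZeroDivisors A) (FractionRing A))

/-- A commutative ring is a total ring of quotients if each of its elements is
either a unit or a zero-divisor. -/
def IsTotalRingOfQuotients (R : Type*) [CommRing R] : Prop :=
  ∀ r : R, IsUnit r ∨ r ∉ nonZeroDivisors R

/-- A commutative ring is pseudo-arithmetical if every Gaussian polynomial over it has
locally principal content ideal. -/
def IsPseudoArithmetical (R : Type*) [CommRing R] : Prop :=
  ∀ f : Polynomial R, IsGaussianPoly f → ∀ P : Ideal R, ∀ hP : P.IsMaximal,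
    haveI := hP.isPrime
    ((contentIdeal f).map (algebraMap R (Localization P.primeCompl))).IsPrincipal

/-- The ideal `0 ⋉ E` of the trivial ring extension `A ⋉ E`: the ideal of elements
with zero first component, i.e. the kernel of the projection `A ⋉ E → A`. -/
def zeroIdealTrivSqZeroExt (A E : Type*) [CommRing A] [AddCommGroup E] [Module A E]
    [Module Aᵐᵒᵖ E] [IsCentralScalar A E] : Ideal (TrivSqZeroExt A E) :=
  RingHom.ker (TrivSqZeroExt.fstHom A A E).toRingHom

/-!
Since `B` is a torsion-free `A`-module, the non-zero-divisors of `R = A ⋉ B` are exactly the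
elements with nonzero first component. Hence extension of fractional ideals, which preserves
invertibility, is available both along `A → R` and along the projection `R → A`.

If `A` is Prüfer and `qf(A) ⊆ B`, an ideal `I` of `R` containing a regular element `r` contains
`0 ⋉ B`, because `r · (0, r₁⁻¹ b) = (0, b)`; so `I` is extended from its projection to `A`, a
nonzero finitely generated, hence invertible, ideal. Conversely, every ideal of `A` is the
projection of its extension to `R`, so `A` is Prüfer when `R` is. Finally, if `a ≠ 0` and
`I = (a, 0) R + (0, 1) R` is invertible, then `1 ∈ I · (R : I)`; but for `n ∈ (R : I)` the
elements `s = n (a, 0)` and `r = n (0, 1)` of `R` satisfy `s (0, 1) = (a, 0) r`, which forces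
`r₁ = 0` and `s₁ ∈ a B`. So every element of `I · (R : I)` has first component in `a B`, and `a`
is a unit of `B`.
-/

open TrivSqZeroExt IsLocalization
open scoped nonZeroDivisors

theorem FractionalIdeal.coe_mul_one_div_of_isUnit {R P : Type*} [CommRing R] [CommRing P]
    [Algebra R P] {S : Submonoid R} {I : FractionalIdeal S P} (hI : IsUnit I) :
    (I : Submodule R P) * (1 / I) = 1 := by
  obtain ⟨u, rfl⟩ := hI
  have hinv : ((↑u⁻¹ : FractionalIdeal S P) : Submodule R P) ≤ 1 / (u : Submodule R P) := by
    rw [Submodule.le_div_iff_mul_le, mul_comm, ← FractionalIdeal.coe_mul, u.mul_inv,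
      FractionalIdeal.coe_one]
  refine le_antisymm Submodule.mul_one_div_le_one ?_
  calc (1 : Submodule R P)
      _ = (u : Submodule R P) * ((↑u⁻¹ : FractionalIdeal S P) : Submodule R P) := by
        rw [← FractionalIdeal.coe_mul, u.mul_inv, FractionalIdeal.coe_one]
      _ ≤ _ := by gcongr

theorem Ideal.eq_top_of_coeSubmodule_mul_one_div_le {R P : Type*} [CommRing R] [CommRing P]
    [Algebra R P] {S : Submonoid R} [IsLocalization S P] (hS : S ≤ R⁰) {I T : Ideal R}
    (hI : IsUnit (I : FractionalIdeal S P))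
    (hIT : coeSubmodule P I * (1 / coeSubmodule P I) ≤ coeSubmodule P T) : T = ⊤ := by
  refine top_le_iff.mp <| (coeSubmodule_le_coeSubmodule (S := P) hS).mp ?_
  rwa [coeSubmodule_top, ← FractionalIdeal.coe_mul_one_div_of_isUnit hI,
    FractionalIdeal.coe_coeIdeal]

theorem Ideal.isUnit_coe_map {A B K L : Type*} [CommRing A] [CommRing B] [CommRing K]
    [CommRing L] [Algebra A K] [Algebra B L] {M : Submonoid A} {N : Submonoid B}
    [IsLocalization M K] [IsLocalization N L] {f : A →+* B} (hf : M ≤ N.comap f) {I : Ideal A}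
    (hI : IsUnit (I : FractionalIdeal M K)) : IsUnit (I.map f : FractionalIdeal N L) := by
  simpa using hI.map (FractionalIdeal.extendedHom' L hf)

namespace TrivSqZeroExt

section Module

variable {A E : Type*} [CommRing A] [AddCommGroup E] [Module A E] [Module Aᵐᵒᵖ E]
  [IsCentralScalar A E]

theorem mem_nonZeroDivisors_iff_fst_ne_zero [IsDomain A] [Module.IsTorsionFree A E]
    [Nontrivial E] {x : TrivSqZeroExt A E} : x ∈ (TrivSqZeroExt A E)⁰ ↔ x.fst ≠ 0 := by
  constructor
  · intro hx h0
    obtain ⟨e, he⟩ := exists_ne (0 : E)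
    have : inr e * x = 0 := by ext <;> simp [h0]
    exact he (by simpa using congrArg snd ((mem_nonZeroDivisors_iff_right.mp hx) _ this))
  · intro hx
    refine mem_nonZeroDivisors_iff_right.mpr fun y hy => ?_
    have h1 : y.fst = 0 := by simpa [hx] using congrArg fst hy
    have h2 : y.snd = 0 := by simpa [h1, hx, op_smul_eq_smul] using congrArg snd hy
    ext <;> simp [h1, h2]

theorem map_fstHom_map_algebraMap (I : Ideal A) :
    (I.map (algebraMap A (TrivSqZeroExt A E))).map (fstHom A A E).toRingHom = I := by
  rw [Ideal.map_map]
  convert Ideal.map_id I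
  ext a
  simp

theorem isPruferDomain_of_isPruferRing [IsDomain A] [Module.IsTorsionFree A E] [Nontrivial E]
    (hR : IsPruferRing (TrivSqZeroExt A E)) : IsPruferDomain A := by
  intro I hfg hI
  obtain ⟨a, haI, ha⟩ := Submodule.exists_mem_ne_zero_of_ne_bot hI
  have hfst : (TrivSqZeroExt A E)⁰ ≤ A⁰.comap (fstHom A A E).toRingHom := fun x hx =>
    mem_nonZeroDivisors_of_ne_zero (mem_nonZeroDivisors_iff_fst_ne_zero.mp hx)
  have hunit := hR (I.map (algebraMap A _)) (hfg.map _)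
    ⟨algebraMap A _ a, Ideal.mem_map_of_mem _ haI,
      mem_nonZeroDivisors_iff_fst_ne_zero.mpr (by simpa [algebraMap_eq_inl] using ha)⟩
  rw [← map_fstHom_map_algebraMap (E := E) I]
  exact Ideal.isUnit_coe_map hfst hunit

end Module

section Algebra

variable {A B : Type*} [CommRing A] [CommRing B] [Algebra A B] [Module Aᵐᵒᵖ B]
  [IsCentralScalar A B]

theorem inr_mem_of_isUnit_algebraMap_fst {I : Ideal (TrivSqZeroExt A B)} {x : TrivSqZeroExt A B}
    (hxI : x ∈ I) (hx : IsUnit (algebraMap A B x.fst)) (b : B) : inr b ∈ I := by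
  obtain ⟨u, hu⟩ := hx
  have : x * inr (↑u⁻¹ * b) = inr b := by
    ext <;> simp [Algebra.smul_def, ← hu]
  exact this ▸ I.mul_mem_right _ hxI

theorem map_algebraMap_map_fstHom {I : Ideal (TrivSqZeroExt A B)} {x : TrivSqZeroExt A B}
    (hxI : x ∈ I) (hx : IsUnit (algebraMap A B x.fst)) :
    (I.map (fstHom A A B).toRingHom).map (algebraMap A (TrivSqZeroExt A B)) = I := by
  refine le_antisymm (Ideal.map_le_iff_le_comap.mpr fun c hc => ?_) fun y hy => ?_
  · obtain ⟨y, hy, rfl⟩ :=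
      (Ideal.mem_map_iff_of_surjective _ fun c => ⟨inl c, rfl⟩).mp hc
    have : algebraMap A _ y.fst = y - inr y.snd := by ext <;> simp [algebraMap_eq_inl]
    simpa [this] using I.sub_mem hy (inr_mem_of_isUnit_algebraMap_fst hxI hx y.snd)
  · rw [← inl_fst_add_inr_snd_eq y]
    have hinl : ∀ c ∈ I, inl (fst c) ∈
        (I.map (fstHom A A B).toRingHom).map (algebraMap A (TrivSqZeroExt A B)) := fun c hc =>
      Ideal.mem_map_of_mem _ (Ideal.mem_map_of_mem _ hc)
    exact Ideal.add_mem _ (hinl y hy) (inr_mem_of_isUnit_algebraMap_fst (hinl x hxI) hx y.snd)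

end Algebra

section Prufer

variable {A B : Type*} [CommRing A] [IsDomain A] [CommRing B] [Algebra A B] [Module Aᵐᵒᵖ B]
  [IsCentralScalar A B] [Module.IsTorsionFree A B] [Nontrivial B]

theorem isPruferRing_of_isPruferDomain (hA : IsPruferDomain A)
    (hU : ∀ a : A, a ≠ 0 → IsUnit (algebraMap A B a)) : IsPruferRing (TrivSqZeroExt A B) := by
  rintro I hfg ⟨r, hrI, hr⟩
  have hr0 : r.fst ≠ 0 := mem_nonZeroDivisors_iff_fst_ne_zero.mp hr
  have hinl : A⁰ ≤ (TrivSqZeroExt A B)⁰.comap (algebraMap A _) := fun a ha =>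
    mem_nonZeroDivisors_iff_fst_ne_zero.mpr <| by
      simpa [algebraMap_eq_inl] using nonZeroDivisors.ne_zero ha
  have hI₀ := hA (I.map (fstHom A A B).toRingHom) (hfg.map _)
    (Submodule.ne_bot_iff _ |>.mpr ⟨_, Ideal.mem_map_of_mem _ hrI, hr0⟩)
  rw [← map_algebraMap_map_fstHom hrI (hU _ hr0)]
  exact Ideal.isUnit_coe_map hinl hI₀

theorem isUnit_algebraMap_of_isPruferRing (hR : IsPruferRing (TrivSqZeroExt A B)) {a : A}
    (ha : a ≠ 0) : IsUnit (algebraMap A B a) := by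
  let Q := FractionRing (TrivSqZeroExt A B)
  let I : Ideal (TrivSqZeroExt A B) := Ideal.span {inl a, inr 1}
  let T : Ideal (TrivSqZeroExt A B) :=
    (Ideal.span {algebraMap A B a}).comap ((algebraMap A B).comp (fstHom A A B).toRingHom)
  have hI : IsUnit (I : FractionalIdeal (TrivSqZeroExt A B)⁰ Q) :=
    hR I (Submodule.fg_span (Set.toFinite _))
    ⟨inl a, Ideal.subset_span (by simp), mem_nonZeroDivisors_iff_fst_ne_zero.mpr (by simpa)⟩
  have hIT : coeSubmodule Q I * (1 / coeSubmodule Q I) ≤ coeSubmodule Q T := by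
    rw [Submodule.mul_le]
    intro m hm n hn
    obtain ⟨x, hx, rfl⟩ := (mem_coeSubmodule Q I).mp hm
    have hnI : ∀ y ∈ I, ∃ z, algebraMap _ Q z = n * algebraMap _ Q y := fun y hy =>
      Submodule.mem_one.mp (hn _ ((mem_coeSubmodule Q I).mpr ⟨y, hy, rfl⟩))
    obtain ⟨s, hs⟩ := hnI (inl a) (Ideal.subset_span (by simp))
    obtain ⟨r, hr⟩ := hnI (inr 1) (Ideal.subset_span (by simp))
    have hsr : s * inr 1 = inl a * r :=
      IsFractionRing.injective _ Q (by simp only [map_mul, hs, hr]; ring)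
    have hr0 : r.fst = 0 := by simpa [ha] using congrArg fst hsr
    have hsnd : algebraMap A B s.fst = algebraMap A B a * r.snd := by
      simpa [Algebra.smul_def] using congrArg snd hsr
    have hsT : s ∈ T := Ideal.mem_span_singleton.mpr ⟨r.snd, hsnd⟩
    have hrT : r ∈ T := by simp [T, hr0]
    obtain ⟨c, d, rfl⟩ := Ideal.mem_span_pair.mp hx
    refine (mem_coeSubmodule Q T).mpr
      ⟨c * s + d * r, T.add_mem (T.mul_mem_left c hsT) (T.mul_mem_left d hrT), ?_⟩
    simp only [map_add, map_mul, hs, hr]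
    ring
  have h1 : (1 : TrivSqZeroExt A B) ∈ T :=
    Ideal.eq_top_of_coeSubmodule_mul_one_div_le le_rfl hI hIT ▸ Submodule.mem_top
  exact isUnit_of_dvd_one (by simpa [T, Ideal.mem_span_singleton] using h1)

end Prufer

end TrivSqZeroExt

/-- For an extension of integral domains `A ⊆ B`, the trivial ring extension
`R := A ⋉ B` is a Prüfer ring iff `A` is a Prüfer domain and every nonzero element of `A`
maps to a unit of `B` (i.e. `qf(A) ⊆ B`). -/
theorem prufer_trivSqZeroExt_iff (A B : Type*) [CommRing A] [IsDomain A]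
    [CommRing B] [IsDomain B] [Algebra A B] [Module Aᵐᵒᵖ B] [IsCentralScalar A B]
    (hinj : Function.Injective (algebraMap A B)) :
    IsPruferRing (TrivSqZeroExt A B) ↔
      IsPruferDomain A ∧ ∀ a : A, a ≠ 0 → IsUnit (algebraMap A B a) := by
  have : Module.IsTorsionFree A B := Module.isTorsionFree_iff_algebraMap_injective.mpr hinj
  exact ⟨fun hR =>
      ⟨isPruferDomain_of_isPruferRing hR, fun _ => isUnit_algebraMap_of_isPruferRing hR⟩,
    fun ⟨hA, hU⟩ => isPruferRing_of_isPruferDomain hA hU⟩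
end

section
/- Let A ⊆ B be an extension of integral domains and let R := A ⋉ B be the trivial ring extension of A by B. Then R is an arithmetical ring if and only if A is a Prüfer domain and B is the quotient field of A (i.e., B is a fraction field of A, IsFractionRing A B). -/
/-!
A ring is arithmetical iff for every prime `P` any two elements `x, y` become comparable for
divisibility once one of them is multiplied by some `s ∉ P`, i.e. `R_P` is a chain ring: a
principal `(x, y)R_P` forces `x ∣ y` or `y ∣ x` in a local ring, and a finite family of pairwise
comparable generators is dominated by one of them.
For a domain this local comparability is equivalent to being Prüfer: an invertible `(a, b)`
gives `a y + b z = 1` with `y, z ∈ (a, b)⁻¹`, and conversely a local generator `x` of `I`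
gives `s / x ∈ I⁻¹` with `s ∉ P`, so `I * I⁻¹` lies in no maximal ideal.

For `R = A ⋉ B`, arithmeticity descends to `A = R / (0 ⋉ B)`. Comparing `(a, 0)` with `(0, 1)`
at every maximal ideal shows that `a ≠ 0` is invertible in `B`, and comparing `(0, 1)` with
`(0, z)` writes `z` as a fraction. Conversely, if `B = Frac A`, then `x` divides `y` as soon as
`x.1 ≠ 0` divides `y.1`, and two elements of `0 ⋉ B` are compared by clearing denominators.
-/

theorem IsLocalization.algebraMap_dvd_algebraMap_iff {R S : Type*} [CommRing R] [CommRing S]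
    [Algebra R S] (M : Submonoid R) [IsLocalization M S] {x y : R} :
    algebraMap R S x ∣ algebraMap R S y ↔ ∃ m ∈ M, x ∣ m * y := by
  simp only [← Ideal.mem_span_singleton, ← Set.image_singleton, ← Ideal.map_span,
    IsLocalization.algebraMap_mem_map_algebraMap_iff M]

theorem IsLocalRing.dvd_or_dvd_of_span_pair_isPrincipal {R : Type*} [CommRing R] [IsLocalRing R]
    {x y : R} (h : (Ideal.span {x, y}).IsPrincipal) : x ∣ y ∨ y ∣ x := by
  obtain ⟨g, hg⟩ := h
  have hx : g ∣ x := Ideal.mem_span_singleton.mp (hg.le (Ideal.subset_span (by simp)))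
  have hy : g ∣ y := Ideal.mem_span_singleton.mp (hg.le (Ideal.subset_span (by simp)))
  obtain ⟨a, rfl⟩ := hx
  obtain ⟨b, rfl⟩ := hy
  obtain ⟨α, β, hαβ⟩ := Ideal.mem_span_pair.mp (hg.ge (Ideal.mem_span_singleton_self g))
  rcases IsLocalRing.isUnit_or_isUnit_one_sub_self (α * a + β * b) with hu | hu
  · rcases IsLocalRing.isUnit_or_isUnit_of_isUnit_add hu with ha | hb
    · exact .inl (mul_dvd_mul_left g ((isUnit_of_mul_isUnit_right ha).dvd))
    · exact .inr (mul_dvd_mul_left g ((isUnit_of_mul_isUnit_right hb).dvd))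
  · -- `(1 - (α a + β b)) g = 0` with a unit coefficient, so `g = 0`
    have hg0 : g = 0 := by
      rw [← hu.mul_right_eq_zero]; linear_combination -hαβ
    simp [hg0]

theorem Ideal.FG.exists_forall_dvd_mul {R : Type*} [CommRing R] {P : Ideal R} [P.IsPrime]
    (hP : ∀ x y : R, ∃ s ∉ P, x ∣ s * y ∨ y ∣ s * x) {I : Ideal R} (hI : I.FG) :
    ∃ x ∈ I, ∃ s ∉ P, ∀ i ∈ I, x ∣ s * i := by
  induction I, hI using Submodule.fg_induction with
  | singleton x =>
    refine ⟨x, Ideal.mem_span_singleton_self x, 1, P.primeCompl.one_mem, fun i hi => ?_⟩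
    simpa using Ideal.mem_span_singleton.mp hi
  | sup I J hIfg hJfg hI hJ =>
    obtain ⟨x, hxI, s, hs, hx⟩ := hI
    obtain ⟨y, hyJ, t, ht, hy⟩ := hJ
    wlog hxy : ∃ u ∉ P, x ∣ u * y generalizing I J x y s t
    · obtain ⟨u, hu, hxy' | hyx⟩ := hP x y
      · exact absurd ⟨u, hu, hxy'⟩ hxy
      · simpa only [sup_comm] using this J I hJfg hIfg y hyJ t ht hy x hxI s hs hx ⟨u, hu, hyx⟩
    obtain ⟨u, hu, hxy⟩ := hxy
    refine ⟨x, Ideal.mem_sup_left hxI, s * t * u, P.primeCompl.mul_mem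
      (P.primeCompl.mul_mem hs ht) hu, fun i hi => ?_⟩
    obtain ⟨i, hiI, j, hj, rfl⟩ := Submodule.mem_sup.mp hi
    have hxj : x ∣ s * t * u * j := calc
      x ∣ u * y := hxy
      _ ∣ u * (t * j) := mul_dvd_mul_left u (hy j hj)
      _ ∣ s * t * u * j := Dvd.intro s (by ring)
    rw [mul_add]
    exact dvd_add ((hx i hiI).trans (Dvd.intro (t * u) (by ring))) hxj

theorem isArithmeticalRing_iff {R : Type*} [CommRing R] :
    IsArithmeticalRing R ↔
      ∀ P : Ideal R, P.IsPrime → ∀ x y : R, ∃ s ∉ P, x ∣ s * y ∨ y ∣ s * x := by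
  constructor
  · intro h P hP x y
    obtain ⟨M, hM, hPM⟩ := Ideal.exists_le_maximal P hP.ne_top
    have hprin := h _ (Submodule.fg_span (Set.toFinite {x, y})) M hM
    rw [Ideal.map_span, Set.image_pair] at hprin
    have := hM.isPrime
    obtain ⟨s, hs, hdvd⟩ | ⟨s, hs, hdvd⟩ := (IsLocalRing.dvd_or_dvd_of_span_pair_isPrincipal
      hprin).imp (IsLocalization.algebraMap_dvd_algebraMap_iff M.primeCompl).mp
      (IsLocalization.algebraMap_dvd_algebraMap_iff M.primeCompl).mp
    · exact ⟨s, fun h => hs (hPM h), .inl hdvd⟩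
    · exact ⟨s, fun h => hs (hPM h), .inr hdvd⟩
  · intro h I hI P hP
    have := hP.isPrime
    obtain ⟨x, hxI, s, hs, hx⟩ := hI.exists_forall_dvd_mul (h P this)
    refine ⟨algebraMap R _ x, le_antisymm (Ideal.map_le_iff_le_comap.mpr fun i hi => ?_)
      ((Ideal.span_singleton_le_iff_mem _).mpr (Ideal.mem_map_of_mem _ hxI))⟩
    exact Ideal.mem_span_singleton.mpr
      ((IsLocalization.algebraMap_dvd_algebraMap_iff P.primeCompl).mpr ⟨s, hs, hx i hi⟩)

theorem IsArithmeticalRing.of_surjective {R S : Type*} [CommRing R] [CommRing S] (f : R →+* S)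
    (hf : Function.Surjective f) (h : IsArithmeticalRing R) : IsArithmeticalRing S := by
  rw [isArithmeticalRing_iff] at h ⊢
  intro P hP x y
  obtain ⟨x, rfl⟩ := hf x
  obtain ⟨y, rfl⟩ := hf y
  obtain ⟨s, hs, hdvd⟩ := h (P.comap f) (Ideal.comap_isPrime f P) x y
  exact ⟨f s, hs, by simpa only [map_mul] using hdvd.imp (map_dvd f) (map_dvd f)⟩

open FractionalIdeal nonZeroDivisors

section PruferDomain

variable {A : Type*} [CommRing A] [IsDomain A]

theorem FractionalIdeal.exists_mul_add_mul_eq_one_of_isUnit_span_pair {a b : A}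
    (h : IsUnit (Ideal.span {a, b} : FractionalIdeal A⁰ (FractionRing A))) :
    ∃ y ∈ (Ideal.span {a, b} : FractionalIdeal A⁰ (FractionRing A))⁻¹,
    ∃ z ∈ (Ideal.span {a, b} : FractionalIdeal A⁰ (FractionRing A))⁻¹,
      algebraMap A _ a * y + algebraMap A _ b * z = 1 := by
  set J : FractionalIdeal A⁰ (FractionRing A) := ↑(Ideal.span {a, b}) with hJdef
  have hJ : J = spanSingleton A⁰ (algebraMap A _ a) + spanSingleton A⁰ (algebraMap A _ b) := by
    rw [hJdef, Ideal.span_insert, coeIdeal_sup, coeIdeal_span_singleton, coeIdeal_span_singleton]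
  have h1 : (1 : FractionRing A) ∈
      (spanSingleton A⁰ (algebraMap A _ a) + spanSingleton A⁰ (algebraMap A _ b)) * J⁻¹ := by
    rw [← hJ, (mul_inv_cancel_iff_isUnit (FractionRing A)).mpr h]
    exact one_mem_one _
  rw [add_mul, ← mem_coe, coe_add, Submodule.add_eq_sup, Submodule.mem_sup] at h1
  obtain ⟨u, hu, v, hv, huv⟩ := h1
  rw [mem_coe, mem_singleton_mul] at hu hv
  obtain ⟨y, hy, rfl⟩ := hu
  obtain ⟨z, hz, rfl⟩ := hv
  exact ⟨y, hy, z, hz, huv⟩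

theorem IsPruferDomain.exists_dvd_mul (h : IsPruferDomain A) {P : Ideal A} (hP : P.IsPrime)
    (a b : A) : ∃ s ∉ P, a ∣ s * b ∨ b ∣ s * a := by
  have h1P : (1 : A) ∉ P := (Ideal.ne_top_iff_one P).mp hP.ne_top
  by_cases hab : Ideal.span {a, b} = ⊥
  · have ha : a = 0 := Ideal.span_eq_bot.mp hab a (by simp)
    exact ⟨1, h1P, .inr (by simp [ha])⟩
  set f := algebraMap A (FractionRing A)
  have hf : Function.Injective f := IsFractionRing.injective A (FractionRing A)
  have hJ0 : (Ideal.span {a, b} : FractionalIdeal A⁰ (FractionRing A)) ≠ 0 :=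
    coeIdeal_ne_zero.mpr hab
  obtain ⟨y, hy, z, hz, hyz⟩ := exists_mul_add_mul_eq_one_of_isUnit_span_pair
    (h _ (Submodule.fg_span (Set.toFinite _)) hab)
  have hint : ∀ w ∈ (Ideal.span {a, b} : FractionalIdeal A⁰ (FractionRing A))⁻¹,
      ∀ i ∈ ({a, b} : Set A), ∃ c, f c = w * f i := fun w hw i hi =>
    (mem_one_iff _).mp ((mem_inv_iff hJ0).mp hw _ (mem_coeIdeal_of_mem _ (Ideal.subset_span hi)))
  obtain ⟨c₁, hc₁⟩ := hint y hy a (by simp)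
  obtain ⟨d₁, hd₁⟩ := hint y hy b (by simp)
  obtain ⟨c₂, hc₂⟩ := hint z hz a (by simp)
  obtain ⟨d₂, hd₂⟩ := hint z hz b (by simp)
  have hone : c₁ + d₂ = 1 := hf (by rw [map_add, map_one, hc₁, hd₂, ← hyz]; ring)
  by_cases hc : c₁ ∈ P
  · have hd : d₂ ∉ P := fun hd => h1P (hone ▸ P.add_mem hc hd)
    exact ⟨d₂, hd, .inr ⟨c₂, hf (by simp only [map_mul, hc₂, hd₂]; ring)⟩⟩
  · exact ⟨c₁, hc, .inl ⟨d₁, hf (by simp only [map_mul, hc₁, hd₁]; ring)⟩⟩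

theorem FractionalIdeal.isUnit_coeIdeal_of_forall_exists_dvd_mul {I : Ideal A} (hI : I ≠ ⊥)
    (h : ∀ P : Ideal A, P.IsMaximal → ∃ x ∈ I, ∃ s ∉ P, ∀ i ∈ I, x ∣ s * i) :
    IsUnit (I : FractionalIdeal A⁰ (FractionRing A)) := by
  set f := algebraMap A (FractionRing A)
  have hf : Function.Injective f := IsFractionRing.injective A (FractionRing A)
  set J : FractionalIdeal A⁰ (FractionRing A) := ↑I
  have hJ0 : J ≠ 0 := coeIdeal_ne_zero.mpr hI
  obtain ⟨J₀, hJ₀⟩ := le_one_iff_exists_coeIdeal.mp (mul_one_div_le_one (I := J))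
  rw [← mul_inv_cancel_iff_isUnit, inv_eq, ← hJ₀, ← coeIdeal_top, coeIdeal_inj]
  by_contra hne
  obtain ⟨P, hP, hle⟩ := Ideal.exists_le_maximal _ hne
  obtain ⟨x, hxI, s, hs, hx⟩ := h P hP
  have hs0 : s ≠ 0 := fun h0 => hs (h0 ▸ P.zero_mem)
  have hx0 : f x ≠ 0 := by
    rw [map_ne_zero_iff f hf]
    rintro rfl
    obtain ⟨i, hiI, hi0⟩ := Submodule.exists_mem_ne_zero_of_ne_bot hI
    exact mul_ne_zero hs0 hi0 (zero_dvd_iff.mp (hx i hiI))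
  -- `s / x` lies in `J⁻¹`, so `s = x * (s / x) ∈ J * J⁻¹`
  have hinv : f s / f x ∈ 1 / J := by
    rw [← inv_eq, mem_inv_iff hJ0]
    intro w hw
    obtain ⟨i, hi, rfl⟩ := (mem_coeIdeal _).mp hw
    obtain ⟨t, ht⟩ := hx i hi
    refine (mem_one_iff _).mpr ⟨t, ?_⟩
    rw [div_mul_eq_mul_div, eq_div_iff hx0, ← map_mul, ← map_mul, ht, mul_comm]
  have hsJ : f s ∈ (J₀ : FractionalIdeal A⁰ (FractionRing A)) := by
    rw [hJ₀, ← mul_div_cancel₀ (f s) hx0]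
    exact mul_mem_mul (mem_coeIdeal_of_mem _ hxI) hinv
  obtain ⟨s', hs', hs's⟩ := (mem_coeIdeal _).mp hsJ
  exact hs (hle (hf hs's ▸ hs'))

theorem isPruferDomain_iff_isArithmeticalRing : IsPruferDomain A ↔ IsArithmeticalRing A := by
  rw [isArithmeticalRing_iff]
  refine ⟨fun h P hP => h.exists_dvd_mul hP, fun h I hI hI0 => ?_⟩
  refine isUnit_coeIdeal_of_forall_exists_dvd_mul hI0 fun P hP => ?_
  have := hP.isPrime
  exact hI.exists_forall_dvd_mul (h P this)

end PruferDomain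

theorem IsLocalization.exists_smul_eq_smul_or {A B : Type*} [CommRing A] [CommRing B]
    [Algebra A B] (M : Submonoid A) [IsLocalization M B] {P : Ideal A}
    (hP : ∀ a b : A, ∃ s ∉ P, a ∣ s * b ∨ b ∣ s * a) (m n : B) :
    ∃ s ∉ P, ∃ c : A, c • m = s • n ∨ c • n = s • m := by
  classical
  obtain ⟨d, hd⟩ := IsLocalization.exist_integer_multiples_of_finset M ({m, n} : Finset B)
  obtain ⟨a, ha⟩ := hd m (by simp)
  obtain ⟨b, hb⟩ := hd n (by simp)
  -- clear the common denominator `d`, which acts invertibly on `B`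
  have key : ∀ {a b : A} {m n : B}, algebraMap A B a = (d : A) • m →
      algebraMap A B b = (d : A) • n → ∀ s c : A, s * b = a * c → c • m = s • n := by
    intro a b m n ha hb s c hsc
    refine (IsLocalization.map_units B d).mul_left_cancel ?_
    rw [← Algebra.smul_def, ← Algebra.smul_def, smul_comm _ c, smul_comm _ s, ← ha, ← hb,
      Algebra.smul_def, Algebra.smul_def, ← map_mul, ← map_mul, hsc, mul_comm]
  obtain ⟨s, hs, ⟨c, hc⟩ | ⟨c, hc⟩⟩ := hP a b
  · exact ⟨s, hs, c, .inl (key ha hb s c hc)⟩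
  · exact ⟨s, hs, c, .inr (key hb ha s c hc)⟩

namespace TrivSqZeroExt

section Module

variable {A M : Type*} [CommRing A] [AddCommGroup M] [Module A M] [Module Aᵐᵒᵖ M]
  [IsCentralScalar A M]

theorem inl_dvd_iff {a : A} {y : TrivSqZeroExt A M} :
    inl a ∣ y ↔ a ∣ y.fst ∧ ∃ n : M, a • n = y.snd := by
  constructor
  · rintro ⟨r, rfl⟩
    exact ⟨⟨r.fst, rfl⟩, r.snd, by simp⟩
  · rintro ⟨⟨c, hc⟩, n, hn⟩
    exact ⟨inl c + inr n, ext (by simp [hc]) (by simp [hn])⟩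

theorem inr_dvd_iff {m : M} {y : TrivSqZeroExt A M} :
    inr m ∣ y ↔ y.fst = 0 ∧ ∃ c : A, c • m = y.snd := by
  constructor
  · rintro ⟨r, rfl⟩
    exact ⟨by simp, r.fst, by simp⟩
  · rintro ⟨h0, c, hc⟩
    exact ⟨inl c, ext (by simp [h0]) (by simp [hc])⟩

theorem exists_fst_notMem_dvd_mul_of_isArithmeticalRing
    (h : IsArithmeticalRing (TrivSqZeroExt A M)) {P : Ideal A} (hP : P.IsPrime)
    (x y : TrivSqZeroExt A M) :
    ∃ s : TrivSqZeroExt A M, s.fst ∉ P ∧ (x ∣ s * y ∨ y ∣ s * x) :=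
  isArithmeticalRing_iff.mp h (P.comap (fstHom A A M)) (Ideal.comap_isPrime _ _) x y

end Module

variable {A B : Type*} [CommRing A] [CommRing B] [Algebra A B] [Module Aᵐᵒᵖ B]
  [IsCentralScalar A B]

theorem dvd_of_fst_dvd {x y : TrivSqZeroExt A B} (hx : IsUnit (algebraMap A B x.fst))
    (h : x.fst ∣ y.fst) : x ∣ y := by
  obtain ⟨c, hc⟩ := h
  obtain ⟨u, hu⟩ := hx.exists_left_inv
  refine ⟨inl c + inr (u * (y.snd - c • x.snd)), ext (by simp [hc]) ?_⟩
  simp only [snd_mul, fst_add, snd_add, fst_inl, snd_inl, fst_inr, snd_inr, add_zero, zero_add,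
    op_smul_eq_smul, Algebra.smul_def]
  linear_combination -(y.snd - algebraMap A B c * x.snd) * hu

theorem isUnit_algebraMap_of_isArithmeticalRing [IsDomain A]
    (h : IsArithmeticalRing (TrivSqZeroExt A B)) {a : A} (ha : a ≠ 0) :
    IsUnit (algebraMap A B a) := by
  -- the ideal of all `c` with `a ∣ c` in `B` lies in no maximal ideal
  have htop : (Ideal.span {algebraMap A B a}).comap (algebraMap A B) = ⊤ := by
    by_contra hne
    obtain ⟨P, hP, hle⟩ := Ideal.exists_le_maximal _ hne
    obtain ⟨s, hs, hdvd | hdvd⟩ :=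
      exists_fst_notMem_dvd_mul_of_isArithmeticalRing h hP.isPrime (inl a) (inr 1)
    · obtain ⟨-, n, hn⟩ := inl_dvd_iff.mp hdvd
      refine hs (hle (Ideal.mem_comap.mpr (Ideal.mem_span_singleton'.mpr ⟨n, ?_⟩)))
      simpa [Algebra.smul_def, mul_comm] using hn
    · obtain ⟨h0, -⟩ := inr_dvd_iff.mp hdvd
      rw [fst_mul, fst_inl, mul_eq_zero] at h0
      exact h0.elim (fun h0 => hs (h0 ▸ P.zero_mem)) ha
  have h1 : (1 : A) ∈ (Ideal.span {algebraMap A B a}).comap (algebraMap A B) :=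
    htop ▸ Submodule.mem_top
  exact isUnit_of_dvd_one (by simpa using Ideal.mem_span_singleton.mp h1)

theorem exists_mul_algebraMap_eq_of_isArithmeticalRing [IsDomain A]
    (hinj : Function.Injective (algebraMap A B)) (h : IsArithmeticalRing (TrivSqZeroExt A B))
    (z : B) : ∃ n d : A, d ≠ 0 ∧ z * algebraMap A B d = algebraMap A B n := by
  obtain ⟨s, hs, hdvd | hdvd⟩ :=
    exists_fst_notMem_dvd_mul_of_isArithmeticalRing h Ideal.isPrime_bot (inr 1) (inr z)
  all_goals
    rw [Ideal.mem_bot] at hs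
    obtain ⟨-, c, hc⟩ := inr_dvd_iff.mp hdvd
    simp only [snd_mul, fst_inr, snd_inr, Algebra.smul_def, MulOpposite.op_zero, zero_smul,
      add_zero, mul_one] at hc
  · exact ⟨c, s.fst, hs, by rw [hc, mul_comm]⟩
  · have hc0 : c ≠ 0 := by
      rintro rfl
      exact hs (hinj (by simpa using hc.symm))
    exact ⟨s.fst, c, hc0, by rw [← hc, mul_comm]⟩

theorem isFractionRing_of_isArithmeticalRing [IsDomain A]
    (hinj : Function.Injective (algebraMap A B)) (h : IsArithmeticalRing (TrivSqZeroExt A B)) :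
    IsFractionRing A B := by
  refine (isLocalization_iff _ _).mpr
    ⟨fun d => ?_, fun z => ?_, fun hxy => ⟨1, by rw [hinj hxy]⟩⟩
  · exact isUnit_algebraMap_of_isArithmeticalRing h (nonZeroDivisors.coe_ne_zero d)
  · obtain ⟨n, d, hd, hz⟩ := exists_mul_algebraMap_eq_of_isArithmeticalRing hinj h z
    exact ⟨(n, ⟨d, mem_nonZeroDivisors_of_ne_zero hd⟩), hz⟩

theorem isArithmeticalRing_of_isFractionRing [IsDomain A] [IsFractionRing A B]
    (hA : IsArithmeticalRing A) : IsArithmeticalRing (TrivSqZeroExt A B) := by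
  rw [isArithmeticalRing_iff] at hA ⊢
  intro P' hP' x y
  have hP := hA (P'.comap (inlHom A B)) (Ideal.comap_isPrime _ _)
  suffices ∃ s ∉ P'.comap (inlHom A B), x ∣ inl s * y ∨ y ∣ inl s * x by
    obtain ⟨s, hs, hdvd⟩ := this
    exact ⟨inl s, hs, hdvd⟩
  have hunit : ∀ a : A, a ≠ 0 → IsUnit (algebraMap A B a) := fun a ha =>
    IsLocalization.map_units B ⟨a, mem_nonZeroDivisors_of_ne_zero ha⟩
  wlog hx : x.fst ≠ 0 generalizing x y
  · by_cases hy : y.fst = 0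
    · obtain ⟨m, rfl⟩ : ∃ m, x = inr m := ⟨x.snd, ext (not_not.mp hx) rfl⟩
      obtain ⟨n, rfl⟩ : ∃ n, y = inr n := ⟨y.snd, ext hy rfl⟩
      obtain ⟨s, hs, c, hc⟩ := IsLocalization.exists_smul_eq_smul_or A⁰ hP m n
      simp only [inl_mul_inr]
      exact ⟨s, hs, hc.imp (fun hc => inr_dvd_iff.mpr ⟨rfl, c, hc⟩)
        fun hc => inr_dvd_iff.mpr ⟨rfl, c, hc⟩⟩
    · simpa only [or_comm] using this y x hy
  obtain ⟨s, hs, hdvd | hdvd⟩ := hP x.fst y.fst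
  · exact ⟨s, hs, .inl (dvd_of_fst_dvd (hunit _ hx) (by simpa using hdvd))⟩
  · by_cases hy : y.fst = 0
    · exact ⟨s, hs, .inl (dvd_of_fst_dvd (hunit _ hx) (by simp [hy]))⟩
    · exact ⟨s, hs, .inr (dvd_of_fst_dvd (hunit _ hy) (by simpa using hdvd))⟩

end TrivSqZeroExt

theorem arithmetical_trivSqZeroExt_iff_general (A B : Type*) [CommRing A] [IsDomain A]
    [CommRing B] [Algebra A B] [Module Aᵐᵒᵖ B] [IsCentralScalar A B]
    (hinj : Function.Injective (algebraMap A B)) :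
    IsArithmeticalRing (TrivSqZeroExt A B) ↔
      IsPruferDomain A ∧ IsFractionRing A B := by
  rw [isPruferDomain_iff_isArithmeticalRing]
  constructor
  · intro h
    exact ⟨h.of_surjective (TrivSqZeroExt.fstHom A A B).toRingHom
        fun a => ⟨TrivSqZeroExt.inl a, rfl⟩,
      TrivSqZeroExt.isFractionRing_of_isArithmeticalRing hinj h⟩
  · rintro ⟨hA, _⟩
    exact TrivSqZeroExt.isArithmeticalRing_of_isFractionRing hA

/-- For an extension of integral domains `A ⊆ B`, the trivial ring extension
`R := A ⋉ B` is an arithmetical ring iff `A` is a Prüfer domain and `B` is the quotient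
field of `A`. -/
theorem arithmetical_trivSqZeroExt_iff (A B : Type*) [CommRing A] [IsDomain A]
    [CommRing B] [IsDomain B] [Algebra A B] [Module Aᵐᵒᵖ B] [IsCentralScalar A B]
    (hinj : Function.Injective (algebraMap A B)) :
    IsArithmeticalRing (TrivSqZeroExt A B) ↔
      IsPruferDomain A ∧ IsFractionRing A B :=
  arithmetical_trivSqZeroExt_iff_general A B hinj
end

section
/- Let A ⊆ B be an extension of integral domains and let R := A ⋉ B be the trivial ring extension of A by B. Then the ideal 0 ⋉ B of R (the ideal of all elements of the form (0,b)) is not flat as an R-module; in particular the weak global dimension of R is at least 2. -/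
/-! The element `x = (0, 1)` of `I = 0 ⋉ B` satisfies `x * x = 0`. If `I` were flat, the map
`I ⊗ I → R ⊗ I ≅ I` would be injective, forcing `x ⊗ x = 0`. But since `R` acts on `I` only
through first components, multiplying second components is an `R`-bilinear map `I × I → I`,
and it sends `(x, x)` to `x ≠ 0`. -/

open TensorProduct TrivSqZeroExt

theorem Module.Flat.tmul_eq_zero_of_smul_eq_zero {R M : Type*} [CommRing R] [AddCommGroup M]
    [Module R M] [Module.Flat R M] {I : Ideal R} (x : I) {m : M} (h : (x : R) • m = 0) :
    x ⊗ₜ[R] m = 0 := by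
  apply Module.Flat.iff_rTensor_injective'.mp ‹_› I
  apply (TensorProduct.lid R M).injective
  simpa using h

namespace zeroIdealTrivSqZeroExt

variable (A B : Type*) [CommRing A] [CommRing B] [Algebra A B] [Module Aᵐᵒᵖ B]
  [IsCentralScalar A B]

theorem inr_mem (b : B) : (inr b : TrivSqZeroExt A B) ∈ zeroIdealTrivSqZeroExt A B := by
  simp [zeroIdealTrivSqZeroExt]

theorem fst_eq_zero {x : TrivSqZeroExt A B} (hx : x ∈ zeroIdealTrivSqZeroExt A B) : x.fst = 0 :=
  hx

def sndMul : zeroIdealTrivSqZeroExt A B →ₗ[TrivSqZeroExt A B]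
    zeroIdealTrivSqZeroExt A B →ₗ[TrivSqZeroExt A B] zeroIdealTrivSqZeroExt A B :=
  LinearMap.mk₂ _ (fun x y => ⟨inr ((x : TrivSqZeroExt A B).snd * (y : TrivSqZeroExt A B).snd),
      inr_mem A B _⟩)
    (fun x y z => by ext <;> simp [add_mul])
    (fun r x y => by ext <;> simp [fst_eq_zero A B x.2])
    (fun x y z => by ext <;> simp [mul_add])
    (fun r x y => by ext <;> simp [fst_eq_zero A B y.2])

theorem inr_tmul_inr_ne_zero {a b : B} (hab : a * b ≠ 0) :
    (⟨inr a, inr_mem A B a⟩ : zeroIdealTrivSqZeroExt A B) ⊗ₜ[TrivSqZeroExt A B]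
      (⟨inr b, inr_mem A B b⟩ : zeroIdealTrivSqZeroExt A B) ≠ 0 := fun h => hab <| by
  simpa [sndMul] using congrArg (fun t => (lift (sndMul A B) t : TrivSqZeroExt A B).snd) h

end zeroIdealTrivSqZeroExt

theorem zeroIdeal_not_flat_trivSqZeroExt_general (A B : Type*) [CommRing A]
    [CommRing B] [IsDomain B] [Algebra A B] [Module Aᵐᵒᵖ B] [IsCentralScalar A B] :
    ¬ Module.Flat (TrivSqZeroExt A B) (zeroIdealTrivSqZeroExt A B) := by
  intro hflat
  let x : zeroIdealTrivSqZeroExt A B := ⟨inr 1, zeroIdealTrivSqZeroExt.inr_mem A B 1⟩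
  have hx_sq : (x : TrivSqZeroExt A B) • x = 0 := Subtype.ext (inr_mul_inr A 1 1)
  exact zeroIdealTrivSqZeroExt.inr_tmul_inr_ne_zero A B (by simp)
    (Module.Flat.tmul_eq_zero_of_smul_eq_zero x hx_sq)

/-- For an extension of integral domains `A ⊆ B`, the ideal `0 ⋉ B` of the
trivial ring extension `R := A ⋉ B` is not flat as an `R`-module. -/
theorem zeroIdeal_not_flat_trivSqZeroExt (A B : Type*) [CommRing A] [IsDomain A]
    [CommRing B] [IsDomain B] [Algebra A B] [Module Aᵐᵒᵖ B] [IsCentralScalar A B]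
    (hinj : Function.Injective (algebraMap A B)) :
    ¬ Module.Flat (TrivSqZeroExt A B) (zeroIdealTrivSqZeroExt A B) :=
  zeroIdeal_not_flat_trivSqZeroExt_general A B
end

section
/- Let K be a field, E a nonzero K-vector space, and R := K ⋉ E the trivial ring extension of K by E. Then the ideal 0 ⋉ E of R (the ideal of all elements of the form (0,e)) is not flat as an R-module; in particular the weak global dimension of R is greater than 1. -/
/-! If `I := 0 ⋉ E` were flat, then `I ⊗ I → I ⊗ R ≅ I` would be injective; its image is
`I * I = 0`, so `I ⊗ I = 0`. But `I ⊗_R I` is nonzero: `R` acts on `I` through `K`, so for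
`e ≠ 0` and a functional `φ` with `φ e ≠ 0` the pairing `(0, a) ⊗ (0, b) ↦ φ a * φ b`
is well defined and does not vanish on `(0, e) ⊗ (0, e)`. -/

open TensorProduct

theorem Module.Flat.subsingleton_tensorProduct_of_smul_eq_zero {R M : Type*} [CommRing R]
    [AddCommGroup M] [Module R M] [Module.Flat R M] (I : Ideal R)
    (h : ∀ a ∈ I, ∀ m : M, a • m = 0) : Subsingleton (I ⊗[R] M) := by
  have hinj : Function.Injective (lift ((LinearMap.lsmul R M).comp I.subtype)) := by
    rw [← LinearMap.lid_comp_rTensor]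
    exact (TensorProduct.lid R M).injective.comp
      (Module.Flat.rTensor_preserves_injective_linearMap _ I.injective_subtype)
  have hzero : lift ((LinearMap.lsmul R M).comp I.subtype) = 0 :=
    TensorProduct.ext' fun a m => h a a.2 m
  rw [hzero] at hinj
  exact ⟨fun x y => hinj rfl⟩

namespace TrivSqZeroExt

variable {A E : Type*} [CommRing A] [AddCommGroup E] [Module A E] [Module Aᵐᵒᵖ E]
  [IsCentralScalar A E]

attribute [local instance] algebraBase

theorem inr_mem_kerIdeal (e : E) : inr e ∈ kerIdeal A E := rfl

theorem mul_eq_zero_of_mem_kerIdeal {x y : TrivSqZeroExt A E} (hx : x ∈ kerIdeal A E)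
    (hy : y ∈ kerIdeal A E) : x * y = 0 := by
  simpa [← pow_two] using Ideal.mul_mem_mul hx hy

def kerIdealDual (φ : Module.Dual A E) : kerIdeal A E →ₗ[TrivSqZeroExt A E] A where
  toFun x := φ (x : TrivSqZeroExt A E).snd
  map_add' x y := by simp
  map_smul' r x := by
    have hx : (x : TrivSqZeroExt A E).fst = 0 := x.2
    change φ (r * x).snd = r.fst * φ (x : TrivSqZeroExt A E).snd
    rw [snd_mul, hx, MulOpposite.op_zero, zero_smul, add_zero, map_smul, smul_eq_mul]

theorem kerIdealDual_apply (φ : Module.Dual A E) (x : kerIdeal A E) :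
    kerIdealDual φ x = φ (x : TrivSqZeroExt A E).snd := rfl

theorem inr_tmul_inr_ne_zero {e e' : E} {φ ψ : Module.Dual A E} (h : φ e * ψ e' ≠ 0) :
    (⟨inr e, inr_mem_kerIdeal e⟩ ⊗ₜ[TrivSqZeroExt A E] ⟨inr e', inr_mem_kerIdeal e'⟩ :
      kerIdeal A E ⊗[TrivSqZeroExt A E] kerIdeal A E) ≠ 0 := by
  intro h0
  apply h
  simpa [kerIdealDual_apply] using
    congrArg (LinearMap.mul' (TrivSqZeroExt A E) A ∘ₗ
      TensorProduct.map (kerIdealDual φ) (kerIdealDual ψ)) h0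

end TrivSqZeroExt

/-- For a field `K` and a nonzero `K`-vector space `E`, the ideal `0 ⋉ E` of the
trivial ring extension `R := K ⋉ E` is not flat as an `R`-module. -/
theorem zeroIdeal_not_flat_trivSqZeroExt_field (K E : Type*) [Field K]
    [AddCommGroup E] [Module K E] [Module Kᵐᵒᵖ E] [IsCentralScalar K E] [Nontrivial E] :
    ¬ Module.Flat (TrivSqZeroExt K E) (zeroIdealTrivSqZeroExt K E) := by
  intro hflat
  have : Module.Flat (TrivSqZeroExt K E) (TrivSqZeroExt.kerIdeal K E) := hflat
  have := Module.Flat.subsingleton_tensorProduct_of_smul_eq_zero (TrivSqZeroExt.kerIdeal K E)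
    fun a ha m => Subtype.ext (TrivSqZeroExt.mul_eq_zero_of_mem_kerIdeal ha m.2)
  obtain ⟨e, he⟩ := exists_ne (0 : E)
  obtain ⟨φ, hφ⟩ : ∃ φ : Module.Dual K E, φ e ≠ 0 := by
    by_contra! h
    exact he ((Module.forall_dual_apply_eq_zero_iff K e).mp h)
  exact TrivSqZeroExt.inr_tmul_inr_ne_zero (mul_ne_zero hφ hφ) (Subsingleton.elim _ _)
end

section
/- Let K ⊊ L be a proper extension of fields (L is a K-algebra and some element of L is not in the image of K). Then the trivial ring extension R := K ⋉ L is a Gaussian ring which is not arithmetical. -/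
/-!
`R = K ⋉ M` is local with maximal ideal `𝔪 = 0 ⋉ M`, and `𝔪² = 0`; so every content ideal is
either `⊤` or contained in `𝔪`. If `c(f), c(g) ⊆ 𝔪`, then `c(fg) ⊆ c(f)c(g) ⊆ 𝔪² = 0`. If
`c(f) = c(g) = ⊤`, then `c(fg) = ⊤`. In the mixed case `c(f) = ⊤ ⊇ 𝔪 ⊇ c(g)`, the product `fg`
only depends on `f mod 𝔪`, which lifts to a unit times a monic polynomial over `K`, and
multiplication by a monic polynomial preserves the content ideal.

A local ring is arithmetical only if its finitely generated ideals are principal. But a principal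
ideal inside `𝔪` has the form `0 ⋉ K m`, so the ideal generated by `(0, 1)` and `(0, x)`, for
`x ∈ L ∖ K`, is not principal.
-/

open scoped Polynomial
open Polynomial hiding contentIdeal
open TrivSqZeroExt IsLocalRing

section ContentIdeal

variable {R : Type*} [CommRing R]

theorem contentIdeal_eq_polynomial_contentIdeal (f : R[X]) : contentIdeal f = f.contentIdeal := by
  refine le_antisymm (Ideal.span_le.2 ?_) (Ideal.span_le.2 ?_)
  · rintro _ ⟨n, rfl⟩
    exact f.coeff_mem_contentIdeal n
  · intro a ha
    obtain ⟨n, -, rfl⟩ := mem_coeffs_iff.1 ha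
    exact Ideal.subset_span ⟨n, rfl⟩

theorem Polynomial.contentIdeal_le_ker_iff {S : Type*} [CommRing S] (φ : R →+* S) (f : R[X]) :
    f.contentIdeal ≤ RingHom.ker φ ↔ f.map φ = 0 := by
  rw [← Ideal.map_eq_bot_iff_le_ker, ← contentIdeal_map_eq_map_contentIdeal, contentIdeal_eq_bot_iff]

theorem Polynomial.mul_eq_zero_of_contentIdeal_mul_eq_bot {f g : R[X]}
    (h : f.contentIdeal * g.contentIdeal = ⊥) : f * g = 0 :=
  (contentIdeal_eq_bot_iff _).1 <| eq_bot_iff.2 <| h ▸ contentIdeal_mul_le_mul_contentIdeal f g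

theorem Polynomial.Monic.contentIdeal_mul {P : R[X]} (hP : P.Monic) (g : R[X]) :
    (P * g).contentIdeal = g.contentIdeal := by
  refine le_antisymm (contentIdeal_le_contentIdeal_of_dvd (dvd_mul_left g P)) ?_
  -- Modulo `c(P g)` the product `P g` vanishes, and monic polynomials are not zero divisors.
  set π := Ideal.Quotient.mk (P * g).contentIdeal
  have hPg : (P * g).map π = 0 := by
    rw [← contentIdeal_eq_bot_iff, contentIdeal_map_eq_map_contentIdeal, Ideal.map_quotient_self]
  rwa [Polynomial.map_mul, (hP.map π).mul_right_eq_zero_iff, ← contentIdeal_eq_bot_iff,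
    contentIdeal_map_eq_map_contentIdeal, Ideal.map_eq_bot_iff_le_ker, Ideal.mk_ker] at hPg

end ContentIdeal

theorem IsArithmeticalRing.isBezout {R : Type*} [CommRing R] [IsLocalRing R]
    (h : IsArithmeticalRing R) : IsBezout R := by
  refine ⟨fun I hI => ?_⟩
  let S := Localization (maximalIdeal R).primeCompl
  let e : R ≃ₐ[R] S := IsLocalization.atUnits R (maximalIdeal R).primeCompl fun _ hx =>
    notMem_maximalIdeal.1 hx
  have hS := (h I hI (maximalIdeal R) (maximalIdeal.isMaximal R)).map_ringHom (e.symm : S →+* R)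
  rwa [Ideal.map_map, show (e.symm : S →+* R).comp (algebraMap R S) = RingHom.id R from
    RingHom.ext e.symm.commutes, Ideal.map_id] at hS

theorem linearIndependent_one_of_notMem_range_algebraMap {K L : Type*} [Field K] [Field L]
    [Algebra K L] {x : L} (hx : x ∉ Set.range (algebraMap K L)) :
    LinearIndependent K ![1, x] :=
  (LinearIndependent.pair_iff' one_ne_zero).2 fun a ha =>
    hx ⟨a, by rw [Algebra.algebraMap_eq_smul_one, ha]⟩

namespace TrivSqZeroExt

section CommRing

variable {R M : Type*} [CommRing R] [AddCommGroup M] [Module R M] [Module Rᵐᵒᵖ M]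
  [IsCentralScalar R M]

instance isLocalHom_fstHom : IsLocalHom (fstHom R R M : TrivSqZeroExt R M →+* R) :=
  ⟨fun _ h => isUnit_iff_isUnit_fst.2 h⟩

instance isLocalRing [IsLocalRing R] : IsLocalRing (TrivSqZeroExt R M) :=
  RingHom.domain_isLocalRing (fstHom R R M : TrivSqZeroExt R M →+* R)

theorem exists_snd_eq_smul_of_mem_span_singleton {y z : TrivSqZeroExt R M}
    (hy : y.fst = 0) (hz : z ∈ Ideal.span {y}) : ∃ a : R, z.snd = a • y.snd := by
  obtain ⟨r, rfl⟩ := Ideal.mem_span_singleton'.1 hz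
  exact ⟨r.fst, by rw [snd_mul, hy, MulOpposite.op_zero, zero_smul, add_zero]⟩

theorem not_isPrincipal_span_inr_pair [Nontrivial R] {m₁ m₂ : M}
    (hm : LinearIndependent R ![m₁, m₂]) :
    ¬ (Ideal.span {inr m₁, inr m₂} : Ideal (TrivSqZeroExt R M)).IsPrincipal := by
  rintro ⟨y, hy⟩
  change Ideal.span _ = Ideal.span {y} at hy
  have hle : (Ideal.span {inr m₁, inr m₂} : Ideal (TrivSqZeroExt R M)) ≤ kerIdeal R M := by
    refine Ideal.span_le.2 ?_
    rintro _ (rfl | rfl)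
    exacts [fst_inr R m₁, fst_inr R m₂]
  have hy0 : y.fst = 0 := hle (hy ▸ Ideal.mem_span_singleton_self y)
  have h₁ : inr m₁ ∈ Ideal.span {y} := hy ▸ Ideal.subset_span (Set.mem_insert _ _)
  have h₂ : inr m₂ ∈ Ideal.span {y} := hy ▸ Ideal.subset_span (Set.mem_insert_of_mem _ rfl)
  obtain ⟨a, ha⟩ := exists_snd_eq_smul_of_mem_span_singleton hy0 h₁
  obtain ⟨b, hb⟩ := exists_snd_eq_smul_of_mem_span_singleton hy0 h₂
  rw [snd_inr] at ha hb
  have hab := LinearIndependent.pair_iff.1 hm b (-a) <| by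
    rw [ha, hb, smul_smul, smul_smul, ← add_smul, neg_mul, mul_comm, add_neg_cancel, zero_smul]
  exact hm.ne_zero 0 (by simp [ha, neg_eq_zero.1 hab.2])

end CommRing

section Field

variable {K M : Type*} [Field K] [AddCommGroup M] [Module K M] [Module Kᵐᵒᵖ M]
  [IsCentralScalar K M]

theorem maximalIdeal_eq_kerIdeal : maximalIdeal (TrivSqZeroExt K M) = kerIdeal K M :=
  (eq_maximalIdeal (RingHom.ker_isMaximal_of_surjective _ fun a => ⟨inl a, fst_inl M a⟩)).symm

theorem maximalIdeal_sq : maximalIdeal (TrivSqZeroExt K M) ^ 2 = ⊥ := by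
  rw [maximalIdeal_eq_kerIdeal, kerIdeal_sq]

theorem contentIdeal_mul_of_contentIdeal_eq_top {f g : (TrivSqZeroExt K M)[X]}
    (hf : f.contentIdeal = ⊤) (hg : g.contentIdeal ≤ maximalIdeal _) :
    (f * g).contentIdeal = g.contentIdeal := by
  refine le_antisymm (contentIdeal_le_contentIdeal_of_dvd (dvd_mul_left g f)) ?_
  set φ := (↑(fstHom K K M) : TrivSqZeroExt K M →+* K)
  set f₀ := f.map φ
  have hf₀ : f₀ ≠ 0 := by
    rw [ne_eq, ← contentIdeal_eq_bot_iff, contentIdeal_map_eq_map_contentIdeal, hf, Ideal.map_top]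
    exact top_ne_bot
  -- Since `𝔪² = 0`, multiplication by `g ∈ 𝔪[X]` only sees `f` modulo `𝔪`.
  have hfg : f * g = f₀.map (inlHom K M) * g := by
    rw [← sub_eq_zero, ← sub_mul]
    refine mul_eq_zero_of_contentIdeal_mul_eq_bot (eq_bot_iff.2 ?_)
    calc _ ≤ maximalIdeal _ * maximalIdeal _ := Ideal.mul_mono ?_ hg
      _ = ⊥ := by rw [← sq, maximalIdeal_sq]
    rw [maximalIdeal_eq_kerIdeal]
    change _ ≤ RingHom.ker φ
    rw [contentIdeal_le_ker_iff, Polynomial.map_sub, Polynomial.map_map,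
      show φ.comp (inlHom K M) = RingHom.id K from RingHom.ext (fst_inl M), Polynomial.map_id,
      sub_self]
  set c := f₀.leadingCoeff
  have hP : (f₀ * C c⁻¹).map (inlHom K M) * g = f * g * C (inl c⁻¹) := by
    rw [hfg, Polynomial.map_mul, Polynomial.map_C, mul_right_comm]
    rfl
  calc g.contentIdeal = ((f₀ * C c⁻¹).map (inlHom K M) * g).contentIdeal :=
        (((monic_mul_leadingCoeff_inv hf₀).map _).contentIdeal_mul g).symm
    _ ≤ (f * g).contentIdeal := contentIdeal_le_contentIdeal_of_dvd (hP ▸ dvd_mul_right _ _)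

theorem isGaussianRing : IsGaussianRing (TrivSqZeroExt K M) := by
  intro f g
  simp only [contentIdeal_eq_polynomial_contentIdeal]
  have dichotomy (p : (TrivSqZeroExt K M)[X]) :
      p.contentIdeal = ⊤ ∨ p.contentIdeal ≤ maximalIdeal _ :=
    (eq_or_ne _ ⊤).imp_right le_maximalIdeal
  rcases dichotomy f with hf | hf <;> rcases dichotomy g with hg | hg
  · rw [hf, hg, Ideal.top_mul, contentIdeal_mul_eq_top_of_contentIdeal_eq_top hf hg]
  · rw [hf, Ideal.top_mul, contentIdeal_mul_of_contentIdeal_eq_top hf hg]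
  · rw [hg, Ideal.mul_top, mul_comm, contentIdeal_mul_of_contentIdeal_eq_top hg hf]
  · have h : f.contentIdeal * g.contentIdeal = ⊥ := by
      rw [eq_bot_iff, ← maximalIdeal_sq, sq]
      exact Ideal.mul_mono hf hg
    rw [h, mul_eq_zero_of_contentIdeal_mul_eq_bot h, contentIdeal_zero]

end Field

end TrivSqZeroExt

/-- For a proper field extension `K ⊊ L`, the trivial ring extension
`R := K ⋉ L` is a Gaussian ring which is not arithmetical. -/
theorem gaussian_not_arithmetical_trivSqZeroExt_field_ext (K L : Type*) [Field K] [Field L]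
    [Algebra K L] [Module Kᵐᵒᵖ L] [IsCentralScalar K L]
    (hproper : ∃ x : L, x ∉ Set.range (algebraMap K L)) :
    IsGaussianRing (TrivSqZeroExt K L) ∧ ¬ IsArithmeticalRing (TrivSqZeroExt K L) := by
  obtain ⟨x, hx⟩ := hproper
  refine ⟨isGaussianRing, fun h => ?_⟩
  have hli : LinearIndependent K ![1, x] := linearIndependent_one_of_notMem_range_algebraMap hx
  exact not_isPrincipal_span_inr_pair hli
    (h.isBezout.isPrincipal_of_FG _ (Submodule.fg_span (Set.toFinite _)))
end

section
/- Let (A,M) be a local integral domain that is not a valuation ring, and let E be a nonzero A-module with M·E = 0. Set B := A ⋉ E and R := A ⋉ B (the trivial ring extension of A by the A-module B). Then R is a total ring of quotients (every element of R is either a unit or a zero-divisor), and R is not a Gaussian ring. -/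
/-!
Over a local ring `R`, an element of `R ⋉ M` is a unit as soon as its first component is; otherwise
its first component lies in the maximal ideal and so kills any nonzero `m ∈ M` annihilated by
the maximal ideal, making the element a zero-divisor. Here `m = (0, e)` in `M = A ⋉ E`.

Being Gaussian passes to quotients, and `A ⋉ (A ⋉ E)` maps onto the dual numbers `A[ε]`. If
`a, b ∈ A` are incomparable under divisibility, the polynomials `f = aX + ε` and `g = bX + ε`
over `A[ε]` satisfy `aε ∈ c(f)c(g)` but `aε ∉ c(fg) = (ab, (a + b)ε)`: the latter would give
`a = abp + q(a + b)` in `A`, which forces `a ∣ b` or `b ∣ a` in a local ring.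
-/

open scoped Polynomial DualNumber
open TrivSqZeroExt IsLocalRing

theorem contentIdeal_map {R S : Type*} [CommRing R] [CommRing S] (φ : R →+* S) (f : R[X]) :
    contentIdeal (f.map φ) = (contentIdeal f).map φ := by
  rw [contentIdeal, contentIdeal, Ideal.map_span, ← Set.range_comp]
  congr with n
  exact Polynomial.coeff_map φ n

theorem IsGaussianRing.of_surjective {R S : Type*} [CommRing R] [CommRing S] (φ : R →+* S)
    (hφ : Function.Surjective φ) (hR : IsGaussianRing R) : IsGaussianRing S := by
  intro f g
  obtain ⟨f, rfl⟩ := Polynomial.map_surjective φ hφ f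
  obtain ⟨g, rfl⟩ := Polynomial.map_surjective φ hφ g
  rw [← Polynomial.map_mul, contentIdeal_map, contentIdeal_map, contentIdeal_map, hR f g,
    Ideal.map_mul]

theorem IsLocalRing.dvd_or_dvd_of_mul_add_mul_eq {A : Type*} [CommRing A] [IsLocalRing A]
    {a b p q : A} (h : a * b * p + q * (a + b) = a) : a ∣ b ∨ b ∣ a := by
  have key : a * (1 - (b * p + q)) = q * b := by linear_combination -h
  rcases isUnit_or_isUnit_one_sub_self (b * p + q) with hu | hu
  · by_contra! hdvd
    have hb : b * p ∈ nonunits A := fun hbp => hdvd.2 (isUnit_of_mul_isUnit_left hbp).dvd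
    have hq : q ∈ nonunits A := fun hq => by
      obtain ⟨q', hq'⟩ := hq.exists_right_inv
      exact hdvd.1 ⟨(1 - (b * p + q)) * q', by linear_combination -q' * key - b * hq'⟩
    exact nonunits_add hb hq hu
  · obtain ⟨u, hu'⟩ := hu.exists_right_inv
    exact Or.inr ⟨q * u, by linear_combination u * key - a * hu'⟩

namespace TrivSqZeroExt

variable {R M : Type*} [CommRing R] [AddCommGroup M] [Module R M] [Module Rᵐᵒᵖ M]
  [IsCentralScalar R M]

theorem isTotalRingOfQuotients_of_smul_eq_zero [IsLocalRing R] {m : M} (hm : m ≠ 0)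
    (h : ∀ r ∈ maximalIdeal R, r • m = 0) : IsTotalRingOfQuotients (TrivSqZeroExt R M) := by
  intro x
  by_cases hx : IsUnit x.fst
  · exact Or.inl (isUnit_iff_isUnit_fst.mpr hx)
  · refine Or.inr fun hnzd => hm ?_
    have hkill : x * inr m = 0 := by
      ext
      · simp
      · simp [h x.fst ((mem_maximalIdeal _).mpr hx)]
    exact inr_injective (hnzd.1 _ hkill)

theorem map_surjective {N : Type*} [AddCommGroup N] [Module R N] [Module Rᵐᵒᵖ N]
    [IsCentralScalar R N] {f : M →ₗ[R] N} (hf : Function.Surjective f) :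
    Function.Surjective (map f) := by
  intro x
  obtain ⟨m, hm⟩ := hf x.snd
  exact ⟨(x.fst, m), TrivSqZeroExt.ext (fst_map f _) ((snd_map f _).trans hm)⟩

end TrivSqZeroExt

open Polynomial (C X) in
theorem DualNumber.not_isGaussianRing_of_not_dvd {A : Type*} [CommRing A] [IsLocalRing A]
    {a b : A} (hab : ¬ a ∣ b) (hba : ¬ b ∣ a) : ¬ IsGaussianRing A[ε] := by
  intro hG
  set f : A[ε][X] := C (inl a) * X + C ε
  set g : A[ε][X] := C (inl b) * X + C ε
  have hfg : f * g = C (inl (a * b)) * X ^ 2 + C (inl (a + b) * ε) * X := by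
    have hε : (C ε : A[ε][X]) ^ 2 = 0 := by rw [← map_pow, sq, DualNumber.eps_mul_eps, map_zero]
    simp only [f, g, inl_mul, inl_add, map_mul, map_add]
    linear_combination hε
  have hmem : inl a * ε ∈ contentIdeal (f * g) := by
    rw [hG f g]
    exact Ideal.mul_mem_mul (Ideal.subset_span ⟨1, by simp [f]⟩)
      (Ideal.subset_span ⟨0, by simp [g]⟩)
  have hle : contentIdeal (f * g) ≤ Ideal.span {inl (a * b), inl (a + b) * ε} := by
    refine Ideal.span_le.mpr ?_
    rintro _ ⟨n, rfl⟩
    rw [hfg]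
    simp only [Polynomial.coeff_add, Polynomial.coeff_C_mul_X_pow, Polynomial.coeff_C_mul_X]
    refine Ideal.add_mem _ ?_ ?_ <;> split_ifs
    · exact Ideal.subset_span (Set.mem_insert _ _)
    · exact Ideal.zero_mem _
    · exact Ideal.subset_span (Set.mem_insert_of_mem _ rfl)
    · exact Ideal.zero_mem _
  obtain ⟨x, y, hxy⟩ := Ideal.mem_span_pair.mp (hle hmem)
  have hsnd : x.snd * (a * b) + y.fst * (a + b) = a := by simpa using congrArg snd hxy
  exact (dvd_or_dvd_of_mul_add_mul_eq (p := x.snd) (q := y.fst) (by linear_combination hsnd)).elim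
    hab hba

/-- Let `(A,M)` be a local integral domain which is not a valuation ring and
`E` a nonzero `A`-module with `M • E = 0`. With `B := A ⋉ E` and `R := A ⋉ B`, the ring `R`
is a total ring of quotients which is not a Gaussian ring. -/
theorem totalQuotients_not_gaussian_nested_trivSqZeroExt (A E : Type*) [CommRing A]
    [IsDomain A] [IsLocalRing A] (hnv : ¬ ValuationRing A)
    [AddCommGroup E] [Module A E] [Module Aᵐᵒᵖ E] [IsCentralScalar A E] [Nontrivial E]
    (hME : ∀ m ∈ IsLocalRing.maximalIdeal A, ∀ e : E, m • e = 0) :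
    IsTotalRingOfQuotients (TrivSqZeroExt A (TrivSqZeroExt A E)) ∧
      ¬ IsGaussianRing (TrivSqZeroExt A (TrivSqZeroExt A E)) := by
  constructor
  · obtain ⟨e, he⟩ := exists_ne (0 : E)
    refine isTotalRingOfQuotients_of_smul_eq_zero (m := inr e) (inr_injective.ne he) fun r hr => ?_
    rw [← inr_smul, hME r hr e, inr_zero]
  · intro hG
    refine hnv (ValuationRing.iff_dvd_total.mpr ⟨fun a b => ?_⟩)
    by_contra! hcomp
    have hsurj := map_surjective (f := (fstHom A A E).toLinearMap) fun a => ⟨inl a, rfl⟩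
    exact DualNumber.not_isGaussianRing_of_not_dvd hcomp.1 hcomp.2
      (hG.of_surjective (map (fstHom A A E).toLinearMap).toRingHom hsurj)
end

section
/- Let (A,M) be a local ring and E a nonzero A-module with M·E = 0 (i.e., E is a vector space over A/M). Then the trivial ring extension R := A ⋉ E is a total ring of quotients: every element of R is either a unit or a zero-divisor. -/
namespace TrivSqZeroExt

variable {R M : Type*} [Semiring R] [AddCommMonoid M] [Module R M] [Module Rᵐᵒᵖ M]

theorem inr_mul_eq_zero_of_op_smul_eq_zero {x : TrivSqZeroExt R M} {m : M}
    (h : MulOpposite.op x.fst • m = 0) : inr m * x = 0 := by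
  ext <;> simp [h]

theorem notMem_nonZeroDivisors_of_op_smul_eq_zero [SMulCommClass R Rᵐᵒᵖ M]
    {x : TrivSqZeroExt R M} {m : M} (hm : m ≠ 0) (h : MulOpposite.op x.fst • m = 0) :
    x ∉ nonZeroDivisors (TrivSqZeroExt R M) := by
  intro hx
  have : (inr m : TrivSqZeroExt R M) = inr 0 :=
    (mul_right_mem_nonZeroDivisors_eq_zero_iff hx).mp (inr_mul_eq_zero_of_op_smul_eq_zero h)
  exact hm (inr_injective this)

end TrivSqZeroExt

/-- Let `(A,M)` be a local ring and `E` a nonzero `A`-module with `M • E = 0`.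
Then the trivial ring extension `R := A ⋉ E` is a total ring of quotients. -/
theorem totalQuotients_trivSqZeroExt (A E : Type*) [CommRing A] [IsLocalRing A]
    [AddCommGroup E] [Module A E] [Module Aᵐᵒᵖ E] [IsCentralScalar A E] [Nontrivial E]
    (hME : ∀ m ∈ IsLocalRing.maximalIdeal A, ∀ e : E, m • e = 0) :
    IsTotalRingOfQuotients (TrivSqZeroExt A E) := by
  intro r
  by_cases hr : IsUnit r.fst
  · exact .inl (TrivSqZeroExt.isUnit_iff_isUnit_fst.mpr hr)
  · obtain ⟨e, he⟩ := exists_ne (0 : E)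
    refine .inr (TrivSqZeroExt.notMem_nonZeroDivisors_of_op_smul_eq_zero (x := r) he ?_)
    rw [op_smul_eq_smul]
    exact hME _ ((IsLocalRing.mem_maximalIdeal _).mpr hr) e
end

section
/- Let (A,M) be a local ring which is not a field, and E a nonzero A-module with M·E = 0. Let R := A ⋉ E be the trivial ring extension, let a be a nonzero element of M and e a nonzero element of E, and consider the polynomial F := (a,0) + (0,e)·X in R[X] (constant coefficient the image of a under the canonical inclusion A → R, linear coefficient the image of e under the canonical inclusion E → R). Then F is a Gaussian polynomial over R, but its content ideal c(F) is not a principal ideal of R; in particular R is not pseudo-arithmetical. -/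
/-!
Since `M • E = 0`, every element of the maximal ideal `M ⋉ E` of `R = A ⋉ E` kills `(0, e)`.
For `F = (a, 0) + (0, e) X` the coefficients of `F g` satisfy
`c_{n+1}(F g) = (a, 0) g_{n+1} + (0, e) g_n`, so `c(F) c(g) ⊆ c(F g)` as soon as all
`(0, e) g_n` (equivalently all `(a, 0) g_n`) lie in `c(F g)`. If no `g_n` is a unit, all
`(0, e) g_n` vanish; otherwise the first unit coefficient puts `(a, 0)` itself into `c(F g)`.
A generator `t` of `c(F) = ((a, 0), (0, e))` would lie in `M ⋉ E`; writing `(0, e) = β t`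
forces `β` to be a unit, hence `t ∈ 0 ⋉ E`, which cannot generate `(a, 0)`. Since `R` is local,
localizing at its maximal ideal changes nothing.
-/

open scoped Polynomial
open Polynomial (C X coeff_mul coeff_X_mul)
open TrivSqZeroExt IsLocalRing

section Content

variable {R : Type*} [CommRing R]

lemma coeff_mem_contentIdeal (f : R[X]) (n : ℕ) : f.coeff n ∈ contentIdeal f :=
  Ideal.subset_span ⟨n, rfl⟩

lemma contentIdeal_mul_le (f g : R[X]) :
    contentIdeal (f * g) ≤ contentIdeal f * contentIdeal g := by
  rw [contentIdeal, Ideal.span_le]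
  rintro _ ⟨n, rfl⟩
  rw [coeff_mul]
  exact Ideal.sum_mem _ fun p _ =>
    Ideal.mul_mem_mul (coeff_mem_contentIdeal f p.1) (coeff_mem_contentIdeal g p.2)

lemma coeff_C_add_C_mul_X_zero (r s : R) : (C r + C s * X : R[X]).coeff 0 = r := by
  simp

lemma coeff_C_add_C_mul_X_one (r s : R) : (C r + C s * X : R[X]).coeff 1 = s := by
  simp

lemma coeff_C_add_C_mul_X_add_two (r s : R) (n : ℕ) :
    (C r + C s * X : R[X]).coeff (n + 2) = 0 := by
  simp

lemma contentIdeal_C_add_C_mul_X (r s : R) :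
    contentIdeal (C r + C s * X) = Ideal.span {r, s} := by
  refine le_antisymm (Ideal.span_le.2 ?_) (Ideal.span_le.2 ?_)
  · rintro _ ⟨_ | _ | n, rfl⟩
    · rw [coeff_C_add_C_mul_X_zero]
      exact Ideal.subset_span (Set.mem_insert r {s})
    · rw [coeff_C_add_C_mul_X_one]
      exact Ideal.subset_span (Set.mem_insert_of_mem r rfl)
    · rw [coeff_C_add_C_mul_X_add_two]
      exact Ideal.zero_mem _
  · refine Set.insert_subset_iff.2 ⟨?_, Set.singleton_subset_iff.2 ?_⟩
    · have h := coeff_mem_contentIdeal (C r + C s * X : R[X]) 0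
      rwa [coeff_C_add_C_mul_X_zero] at h
    · have h := coeff_mem_contentIdeal (C r + C s * X : R[X]) 1
      rwa [coeff_C_add_C_mul_X_one] at h

lemma coeff_C_add_C_mul_X_mul_zero (r s : R) (g : R[X]) :
    ((C r + C s * X) * g).coeff 0 = r * g.coeff 0 := by
  rw [Polynomial.mul_coeff_zero, coeff_C_add_C_mul_X_zero]

lemma coeff_C_add_C_mul_X_mul_succ (r s : R) (g : R[X]) (n : ℕ) :
    ((C r + C s * X) * g).coeff (n + 1) = r * g.coeff (n + 1) + s * g.coeff n := by
  simp [add_mul, mul_assoc, coeff_X_mul]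

lemma forall_mul_coeff_mem_contentIdeal_iff (r s : R) (g : R[X]) :
    (∀ n, r * g.coeff n ∈ contentIdeal ((C r + C s * X) * g)) ↔
      ∀ n, s * g.coeff n ∈ contentIdeal ((C r + C s * X) * g) := by
  have hsucc n := coeff_mem_contentIdeal ((C r + C s * X : R[X]) * g) (n + 1)
  simp only [coeff_C_add_C_mul_X_mul_succ] at hsucc
  refine ⟨fun h n => by simpa using Ideal.sub_mem _ (hsucc n) (h (n + 1)), fun h n => ?_⟩
  rcases n with _ | n
  · exact coeff_C_add_C_mul_X_mul_zero r s g ▸ coeff_mem_contentIdeal _ 0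
  · simpa using Ideal.sub_mem _ (hsucc n) (h n)

lemma isGaussianPoly_C_add_C_mul_X (r s : R)
    (h : ∀ g : R[X], ∀ n, s * g.coeff n ∈ contentIdeal ((C r + C s * X) * g)) :
    IsGaussianPoly (C r + C s * X) := by
  intro g
  refine le_antisymm (contentIdeal_mul_le _ g) ?_
  rw [contentIdeal_C_add_C_mul_X, contentIdeal, Ideal.span_mul_span', Ideal.span_le]
  rintro _ ⟨x, hx, _, ⟨n, rfl⟩, rfl⟩
  rcases hx with rfl | rfl
  exacts [(forall_mul_coeff_mem_contentIdeal_iff _ s g).2 (h g) n, h g n]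

end Content

lemma Ideal.IsPrincipal.of_map_algebraMap_localization_maximalIdeal {R : Type*} [CommRing R]
    [IsLocalRing R] {I : Ideal R}
    (h : (I.map (algebraMap R (Localization (maximalIdeal R).primeCompl))).IsPrincipal) :
    I.IsPrincipal := by
  let e := IsLocalization.atUnits R (maximalIdeal R).primeCompl
    (S := Localization (maximalIdeal R).primeCompl) fun _ hx => notMem_maximalIdeal.1 hx
  have he : I.map (algebraMap R _) = I.comap e.toRingEquiv.symm := by
    rw [Ideal.comap_symm]
    congr 1
  rw [he] at h
  exact Ideal.IsPrincipal.of_comap e.toRingEquiv.symm e.toRingEquiv.symm.surjective I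

namespace TrivSqZeroExt

variable {A E : Type*} [CommRing A] [AddCommGroup E] [Module A E] [Module Aᵐᵒᵖ E]
  [IsCentralScalar A E]

instance [IsLocalRing A] : IsLocalRing (TrivSqZeroExt A E) :=
  haveI : IsLocalHom (fstHom A A E).toRingHom := ⟨fun _ hx => isUnit_iff_isUnit_fst.2 hx⟩
  (fstHom A A E).toRingHom.domain_isLocalRing

variable [IsLocalRing A]

lemma snd_mul_eq_zero_of_fst_mem_maximalIdeal
    (hME : ∀ m ∈ maximalIdeal A, ∀ x : E, m • x = 0) {x y : TrivSqZeroExt A E}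
    (hx : x.fst ∈ maximalIdeal A) (hy : y.fst ∈ maximalIdeal A) : (x * y).snd = 0 := by
  rw [snd_mul, hME _ hx, op_smul_eq_smul, hME _ hy, add_zero]

lemma inr_mul_eq_zero_of_fst_mem_maximalIdeal
    (hME : ∀ m ∈ maximalIdeal A, ∀ x : E, m • x = 0) (e : E) {y : TrivSqZeroExt A E}
    (hy : y.fst ∈ maximalIdeal A) : inr e * y = 0 :=
  TrivSqZeroExt.ext (by simp)
    (snd_mul_eq_zero_of_fst_mem_maximalIdeal hME (by simp) hy)

lemma isGaussianPoly_C_inl_add_C_inr_mul_X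
    (hME : ∀ m ∈ maximalIdeal A, ∀ x : E, m • x = 0) (a : A) (e : E) :
    IsGaussianPoly (C (inl a) + C (inr e) * X : (TrivSqZeroExt A E)[X]) := by
  classical
  refine isGaussianPoly_C_add_C_mul_X _ _ fun g => ?_
  by_cases hM : ∀ n, (g.coeff n).fst ∈ maximalIdeal A
  · intro n
    rw [inr_mul_eq_zero_of_fst_mem_maximalIdeal hME e (hM n)]
    exact Ideal.zero_mem _
  push Not at hM
  set k := Nat.find hM
  have hunit : IsUnit (g.coeff k) :=
    isUnit_iff_isUnit_fst.2 (notMem_maximalIdeal.1 (Nat.find_spec hM))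
  have hcoeff : ((C (inl a) + C (inr e) * X) * g).coeff k = inl a * g.coeff k := by
    rcases hk : k with _ | j
    · exact coeff_C_add_C_mul_X_mul_zero _ _ g
    · have hj : (g.coeff j).fst ∈ maximalIdeal A := not_not.1 (Nat.find_min hM (by omega))
      rw [coeff_C_add_C_mul_X_mul_succ, inr_mul_eq_zero_of_fst_mem_maximalIdeal hME e hj,
        add_zero]
  have ha : inl a ∈ contentIdeal ((C (inl a) + C (inr e) * X) * g) :=
    (Ideal.mul_unit_mem_iff_mem _ hunit).1 (hcoeff ▸ coeff_mem_contentIdeal _ k)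
  exact (forall_mul_coeff_mem_contentIdeal_iff _ _ g).1 fun n => Ideal.mul_mem_right _ _ ha

lemma fst_eq_zero_of_inr_mem_span_singleton
    (hME : ∀ m ∈ maximalIdeal A, ∀ x : E, m • x = 0) {t : TrivSqZeroExt A E}
    (ht : t.fst ∈ maximalIdeal A) {e : E} (he : e ≠ 0) (h : inr e ∈ Ideal.span {t}) :
    t.fst = 0 := by
  obtain ⟨β, hβ⟩ := Ideal.mem_span_singleton'.1 h
  have hβ_unit : IsUnit β.fst := by
    by_contra hβM
    exact he (by simpa [hβ] using snd_mul_eq_zero_of_fst_mem_maximalIdeal hME hβM ht)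
  simpa [hβ_unit.mul_right_eq_zero] using congrArg fst hβ

lemma not_isPrincipal_span_inl_inr
    (hME : ∀ m ∈ maximalIdeal A, ∀ x : E, m • x = 0) {a : A} (haM : a ∈ maximalIdeal A)
    (ha : a ≠ 0) {e : E} (he : e ≠ 0) :
    ¬ (Ideal.span {inl a, inr e} : Ideal (TrivSqZeroExt A E)).IsPrincipal := by
  rintro ⟨t, ht⟩
  rw [Ideal.submodule_span_eq] at ht
  have hspan : Ideal.span {inl a, inr e} ≤ (maximalIdeal A).comap (fstHom A A E).toRingHom :=
    Ideal.span_le.2 <| Set.insert_subset_iff.2 ⟨by simpa using haM, by simp⟩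
  have ht0 : t.fst = 0 := fst_eq_zero_of_inr_mem_span_singleton hME
    (hspan (ht ▸ Ideal.mem_span_singleton_self t)) he (ht ▸ Ideal.subset_span (by simp))
  obtain ⟨α, hα⟩ := Ideal.mem_span_singleton'.1 (ht ▸ Ideal.subset_span (by simp) :
    inl a ∈ Ideal.span {t})
  exact ha (by simpa [ht0] using (congrArg fst hα).symm)

end TrivSqZeroExt

theorem gaussian_poly_content_not_principal_general (A E : Type*) [CommRing A] [IsLocalRing A]
    [AddCommGroup E] [Module A E] [Module Aᵐᵒᵖ E] [IsCentralScalar A E]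
    (hME : ∀ m ∈ IsLocalRing.maximalIdeal A, ∀ x : E, m • x = 0)
    (a : A) (haM : a ∈ IsLocalRing.maximalIdeal A) (ha : a ≠ 0)
    (e : E) (he : e ≠ 0) :
    IsGaussianPoly
        (Polynomial.C (TrivSqZeroExt.inl a) +
          Polynomial.C (TrivSqZeroExt.inr e) * Polynomial.X :
          Polynomial (TrivSqZeroExt A E)) ∧
      ¬ (contentIdeal
          (Polynomial.C (TrivSqZeroExt.inl a) +
            Polynomial.C (TrivSqZeroExt.inr e) * Polynomial.X :
            Polynomial (TrivSqZeroExt A E))).IsPrincipal ∧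
      ¬ IsPseudoArithmetical (TrivSqZeroExt A E) := by
  have hGauss := isGaussianPoly_C_inl_add_C_inr_mul_X hME a e
  have hnp : ¬ (contentIdeal (C (inl a) + C (inr e) * X :
      (TrivSqZeroExt A E)[X])).IsPrincipal := by
    rw [contentIdeal_C_add_C_mul_X]
    exact not_isPrincipal_span_inl_inr hME haM ha he
  refine ⟨hGauss, hnp, fun hPA => hnp ?_⟩
  exact Ideal.IsPrincipal.of_map_algebraMap_localization_maximalIdeal
    (hPA _ hGauss _ (maximalIdeal.isMaximal _))

/-- Let `(A,M)` be a local ring which is not a field and `E` a nonzero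
`A`-module with `M • E = 0`. For `a ≠ 0` in `M` and `e ≠ 0` in `E`, the polynomial
`F := (a,0) + (0,e)·X` over `R := A ⋉ E` is Gaussian but its content ideal is not
principal; in particular `R` is not pseudo-arithmetical. -/
theorem gaussian_poly_content_not_principal (A E : Type*) [CommRing A] [IsLocalRing A]
    (hA : ¬ IsField A)
    [AddCommGroup E] [Module A E] [Module Aᵐᵒᵖ E] [IsCentralScalar A E] [Nontrivial E]
    (hME : ∀ m ∈ IsLocalRing.maximalIdeal A, ∀ x : E, m • x = 0)
    (a : A) (haM : a ∈ IsLocalRing.maximalIdeal A) (ha : a ≠ 0)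
    (e : E) (he : e ≠ 0) :
    IsGaussianPoly
        (Polynomial.C (TrivSqZeroExt.inl a) +
          Polynomial.C (TrivSqZeroExt.inr e) * Polynomial.X :
          Polynomial (TrivSqZeroExt A E)) ∧
      ¬ (contentIdeal
          (Polynomial.C (TrivSqZeroExt.inl a) +
            Polynomial.C (TrivSqZeroExt.inr e) * Polynomial.X :
            Polynomial (TrivSqZeroExt A E))).IsPrincipal ∧
      ¬ IsPseudoArithmetical (TrivSqZeroExt A E) :=
  gaussian_poly_content_not_principal_general A E hME a haM ha e he
end
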